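/- arXiv:1901.08122 — 2 statements merged into one kernel-verified Lean document; each statement's English description precedes it below -/
import Mathlib

section
/- Let Φ be a root system in E with a fixed set of positive roots Φ^+, and let T' be a special closed subset of Φ with |T'| = n < |Φ^+|. Then there exists a special closed subset T of Φ with |T| = n + 1 and a root α ∈ T \ (T + T) such that T \ {α} is conjugate to T' under the Weyl group W(Φ). -/
open scoped RealInnerProductSpace

/-- The reflection determined by a root `α`: `s_α(x) = x - (2(x,α)/(α,α)) α`. -/
noncomputable def reflectRoot {E : Type*} [NormedAddCommGroup E] [InnerProductSpace ℝ E] (α x : E) : E :=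
  x - (2 * ⟪x, α⟫ / ⟪α, α⟫) • α

/-- A root system in a finite-dimensional real inner product space. -/
def IsRootSystem {E : Type*} [NormedAddCommGroup E] [InnerProductSpace ℝ E] (Φ : Set E) : Prop :=
  Φ.Finite ∧ Submodule.span ℝ Φ = ⊤ ∧ (0 : E) ∉ Φ ∧
    (∀ α ∈ Φ, ∀ t : ℝ, t • α ∈ Φ → t • α = α ∨ t • α = -α) ∧
    (∀ α ∈ Φ, ∀ β ∈ Φ, reflectRoot α β ∈ Φ) ∧
    (∀ α ∈ Φ, ∀ β ∈ Φ, ∃ n : ℤ, 2 * ⟪β, α⟫ / ⟪α, α⟫ = (n : ℝ))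

/-- `T` is a closed subset of the root system `Φ`. -/
def IsClosedSub {E : Type*} [AddCommGroup E] (Φ T : Set E) : Prop :=
  T ⊆ Φ ∧ ∀ α ∈ T, ∀ β ∈ T, α + β ∈ Φ → α + β ∈ T

/-- The symmetric part `T^r = {α ∈ T | -α ∈ T}`. -/
def symmPart {E : Type*} [AddCommGroup E] (T : Set E) : Set E := {α ∈ T | -α ∈ T}

/-- The special part `T^u = {α ∈ T | -α ∉ T}`. -/
def specPart {E : Type*} [AddCommGroup E] (T : Set E) : Set E := {α ∈ T | -α ∉ T}

/-- `T + T`: elements of `T` that are sums of two elements of `T`. -/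
def sumSet {E : Type*} [AddCommGroup E] (T : Set E) : Set E :=
  {γ ∈ T | ∃ α ∈ T, ∃ β ∈ T, γ = α + β}

/-- The Weyl group of `Φ`: the subgroup of linear automorphisms of `E` generated by the
reflections in the roots. -/
def weylGroup {E : Type*} [NormedAddCommGroup E] [InnerProductSpace ℝ E] (Φ : Set E) :
    Subgroup (E ≃ₗ[ℝ] E) :=
  Subgroup.closure {w | ∃ α ∈ Φ, ∀ x, w x = reflectRoot α x}

/-- `Φp` is a set of positive roots of `Φ`. -/
def IsPositiveSystem {E : Type*} [NormedAddCommGroup E] [InnerProductSpace ℝ E]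
    (Φ Φp : Set E) : Prop :=
  ∃ f : E →ₗ[ℝ] ℝ, (∀ α ∈ Φ, f α ≠ 0) ∧ Φp = {α ∈ Φ | 0 < f α}


/-!
A special closed set `T'` lies in an open half-space. Otherwise some nonnegative combination of
its elements vanishes; two roots `a, b` in its support have `⟪a, b⟫ < 0`, so `a + b` is a root,
lies in `T'` (closed) and is nonzero (special), and trading `a` for `a + b` either shrinks the
support or adds `b` to the sum of its elements. The same merging shows that no nonempty sum of
elements of `T'` vanishes, so this process cannot cycle.

Perturbing the separating functional gives a functional `g`, positive on `T'` and nonzero on `Φ`,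
whose positive roots are as many as those of `Φ⁺`, hence not all in `T'`. A root `α ∉ T'` with
`g α > 0` maximal can be added: `T' ∪ {α}` is closed and special, `α` is not a sum in it, and
removing `α` gives back `T'` itself.
-/

theorem reflectRoot_eq_add {E : Type*} [NormedAddCommGroup E] [InnerProductSpace ℝ E] {α β : E}
    (h : 2 * ⟪β, α⟫ / ⟪α, α⟫ = -1) : reflectRoot α β = β + α := by
  rw [reflectRoot, h, neg_one_smul, sub_neg_eq_add]

namespace IsRootSystem

variable {E : Type*} [NormedAddCommGroup E] [InnerProductSpace ℝ E] {Φ : Set E}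
  (hΦ : IsRootSystem Φ) {α β : E}
include hΦ

theorem ne_zero (hα : α ∈ Φ) : α ≠ 0 := fun h => hΦ.2.2.1 (h ▸ hα)

theorem inner_self_pos (hα : α ∈ Φ) : 0 < ⟪α, α⟫ :=
  real_inner_self_pos.2 (hΦ.ne_zero hα)

theorem neg_mem (hα : α ∈ Φ) : -α ∈ Φ := by
  have h := hΦ.2.2.2.2.1 α hα α hα
  rwa [reflectRoot, mul_div_assoc, div_self (hΦ.inner_self_pos hα).ne', mul_one, two_smul,
    sub_add_cancel_left] at h

theorem add_self_notMem (hα : α ∈ Φ) : α + α ∉ Φ := by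
  intro h
  rcases hΦ.2.2.2.1 α hα 2 (by rwa [two_smul]) with h2 | h2
  · exact hΦ.ne_zero hα (add_eq_left.1 (by rwa [two_smul] at h2))
  · have h3 : (3 : ℝ) • α = 0 := by
      rw [show (3 : ℝ) = 2 + 1 by norm_num, add_smul, h2, one_smul, neg_add_cancel]
    exact hΦ.ne_zero hα ((smul_eq_zero.1 h3).resolve_left three_ne_zero)

theorem abs_inner_lt_norm_mul_norm (hα : α ∈ Φ) (hβ : β ∈ Φ) (hβα : β ≠ α) (hβα' : β ≠ -α) :
    |⟪α, β⟫| < ‖α‖ * ‖β‖ := by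
  refine (abs_real_inner_le_norm α β).lt_of_ne fun h => ?_
  obtain ⟨r, -, rfl⟩ :=
    (norm_inner_eq_norm_iff (𝕜 := ℝ) (hΦ.ne_zero hα) (hΦ.ne_zero hβ)).1 (by simpa using h)
  exact (hΦ.2.2.2.1 α hα r hβ).elim hβα hβα'

theorem add_mem_of_inner_neg (hα : α ∈ Φ) (hβ : β ∈ Φ) (hinner : ⟪α, β⟫ < 0)
    (hne : α + β ≠ 0) : α + β ∈ Φ := by
  have hαα := hΦ.inner_self_pos hα
  have hββ := hΦ.inner_self_pos hβ
  have hβα : β ≠ α := by rintro rfl; linarith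
  have hβα' : β ≠ -α := by rintro rfl; simp at hne
  have hcs : ⟪α, β⟫ ^ 2 < ⟪α, α⟫ * ⟪β, β⟫ := by
    have h := hΦ.abs_inner_lt_norm_mul_norm hα hβ hβα hβα'
    rw [real_inner_self_eq_norm_sq, real_inner_self_eq_norm_sq, ← sq_abs, ← mul_pow]
    exact pow_lt_pow_left₀ h (abs_nonneg _) two_ne_zero
  obtain ⟨n, hn⟩ := hΦ.2.2.2.2.2 α hα β hβ
  obtain ⟨m, hm⟩ := hΦ.2.2.2.2.2 β hβ α hα
  -- The Cartan integers `n, m` are negative and `n m = 4 ⟪α, β⟫² / (⟪α, α⟫ ⟪β, β⟫) < 4`.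
  have hn0 : n < 0 := by
    exact_mod_cast hn ▸ div_neg_of_neg_of_pos (by rw [real_inner_comm]; linarith) hαα
  have hm0 : m < 0 := by exact_mod_cast hm ▸ div_neg_of_neg_of_pos (by linarith) hββ
  have hnm : n * m < 4 := by
    have : (n * m : ℝ) < 4 := by
      rw [← hn, ← hm, div_mul_div_comm, div_lt_iff₀ (by positivity), real_inner_comm]
      nlinarith
    exact_mod_cast this
  obtain rfl | rfl : n = -1 ∨ m = -1 := by
    by_contra! h
    nlinarith [show n ≤ -2 by omega, show m ≤ -2 by omega]
  · have h := hΦ.2.2.2.2.1 α hα β hβ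
    rwa [reflectRoot_eq_add (by rw [hn]; norm_num), add_comm] at h
  · have h := hΦ.2.2.2.2.1 β hβ α hα
    rwa [reflectRoot_eq_add (by rw [hm]; norm_num)] at h

end IsRootSystem

namespace IsRootSystem

variable {E : Type*} [NormedAddCommGroup E] [InnerProductSpace ℝ E] {Φ T : Set E}
  (hΦ : IsRootSystem Φ) (hT : IsClosedSub Φ T) (hspec : ∀ α ∈ T, -α ∉ T)
include hΦ hT hspec

theorem add_list_sum_ne_zero (l : List E) (hl : ∀ x ∈ l, x ∈ T) {t : E} (ht : t ∈ T) :
    t + l.sum ≠ 0 := by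
  classical
  induction hk : l.length using Nat.strong_induction_on generalizing l t with
  | _ k ih =>
  intro hsum
  -- Some summand `b` has `⟪t, b⟫ < 0`, so `t + b ∈ T` and we may merge `t` and `b`.
  obtain ⟨b, hb, htb⟩ : ∃ b ∈ l, ⟪t, b⟫ < 0 := by
    refine List.exists_lt_of_sum_lt _ (fun _ => 0) ?_
    have h : ⟪t, l.sum⟫ = (l.map (inner ℝ t)).sum := map_list_sum (innerₛₗ ℝ t) l
    rw [← h, eq_neg_of_add_eq_zero_right hsum, inner_neg_right]
    simpa using hΦ.inner_self_pos (hT.1 ht)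
  have hbT := hl b hb
  have htb0 : t + b ≠ 0 := fun h => hspec t ht (eq_neg_of_add_eq_zero_right h ▸ hbT)
  have htbT : t + b ∈ T :=
    hT.2 t ht b hbT (hΦ.add_mem_of_inner_neg (hT.1 ht) (hT.1 hbT) htb htb0)
  refine ih _ ?_ (l.erase b) (fun x hx => hl x (List.mem_of_mem_erase hx)) htbT rfl ?_
  · rw [List.length_erase_of_mem hb, ← hk]
    exact Nat.sub_lt (List.length_pos_of_mem hb) one_pos
  · rwa [add_assoc, List.sum_erase hb]

theorem neg_notMem_addSubmonoidClosure {t : E} (ht : t ∈ T) :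
    -t ∉ AddSubmonoid.closure T := fun h => by
  obtain ⟨l, hl, hsum⟩ := AddSubmonoid.exists_list_of_mem_closure h
  exact hΦ.add_list_sum_ne_zero hT hspec l hl ht (by rw [hsum, add_neg_cancel])

end IsRootSystem

theorem Finset.card_lt_or_sum_eq_of_subset_insert_erase {M : Type*} [AddCommGroup M]
    [DecidableEq M] {S S' : Finset M} {a γ : M} (ha : a ∈ S) (h : S' ⊆ insert γ (S.erase a)) :
    S'.card < S.card ∨ S'.card = S.card ∧ ∑ x ∈ S', x = ∑ x ∈ S, x - a + γ := by
  have hS : 0 < S.card := Finset.card_pos.2 ⟨a, ha⟩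
  have hle : (insert γ (S.erase a)).card ≤ S.card := by
    have := Finset.card_insert_le γ (S.erase a)
    rw [Finset.card_erase_of_mem ha] at this
    omega
  rcases ((Finset.card_le_card h).trans hle).lt_or_eq with hlt | heq
  · exact Or.inl hlt
  have hγ : γ ∉ S.erase a := fun hγ => by
    rw [Finset.insert_eq_of_mem hγ] at h
    have := Finset.card_le_card h
    rw [Finset.card_erase_of_mem ha] at this
    omega
  rw [Finset.eq_of_subset_of_card_le h (heq ▸ hle), Finset.sum_insert hγ,
    ← Finset.sum_erase_add S _ ha]
  refine Or.inr ⟨?_, by abel⟩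
  rw [Finset.card_insert_of_notMem hγ, Finset.card_erase_of_mem ha]
  omega

namespace Finsupp

variable {M : Type*} [AddCommGroup M]

/-- Rewrites `c a • a + c b • b` as `c a • (a + b) + (c b - c a) • b`. -/
noncomputable def mergeAdd (c : M →₀ ℝ) (a b : M) : M →₀ ℝ :=
  c + single (a + b) (c a) - single a (c a) - single b (c a)

variable {c : M →₀ ℝ} {a b : M}

@[simp]
theorem linearCombination_mergeAdd [Module ℝ M] :
    linearCombination ℝ id (c.mergeAdd a b) = linearCombination ℝ id c := by
  simp only [mergeAdd, map_add, map_sub, linearCombination_single, id, smul_add]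
  abel

theorem mergeAdd_apply_left (hb : b ≠ 0) (hab : a ≠ b) : c.mergeAdd a b a = 0 := by
  simp [mergeAdd, hb, hab.symm]

theorem mergeAdd_apply_right (ha : a ≠ 0) (hab : a ≠ b) : c.mergeAdd a b b = c b - c a := by
  simp [mergeAdd, ha, hab]

theorem mergeAdd_apply_add (ha : a ≠ 0) (hb : b ≠ 0) :
    c.mergeAdd a b (a + b) = c (a + b) + c a := by
  simp [mergeAdd, ha, hb]

theorem mergeAdd_apply_of_ne {x : M} (hxa : x ≠ a) (hxb : x ≠ b) (hx : x ≠ a + b) :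
    c.mergeAdd a b x = c x := by
  simp [mergeAdd, hxa.symm, hxb.symm, hx.symm]

theorem mergeAdd_nonneg (ha : a ≠ 0) (hb : b ≠ 0) (hab : a ≠ b) (hc : ∀ x, 0 ≤ c x)
    (hcab : c a ≤ c b) (x : M) : 0 ≤ c.mergeAdd a b x := by
  by_cases hxa : x = a
  · rw [hxa, mergeAdd_apply_left hb hab]
  by_cases hxb : x = b
  · rw [hxb, mergeAdd_apply_right ha hab]; linarith
  by_cases hx : x = a + b
  · rw [hx, mergeAdd_apply_add ha hb]; linarith [hc (a + b), hc a]
  · rw [mergeAdd_apply_of_ne hxa hxb hx]; exact hc x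

theorem support_mergeAdd_subset [DecidableEq M] (hb : b ≠ 0) (hab : a ≠ b)
    (hcb : b ∈ c.support) : (c.mergeAdd a b).support ⊆ insert (a + b) (c.support.erase a) := by
  intro x hx
  rw [mem_support_iff] at hx
  by_cases hxa : x = a
  · exact absurd (by rw [hxa, mergeAdd_apply_left hb hab]) hx
  by_cases hab' : x = a + b
  · exact Finset.mem_insert.2 (Or.inl hab')
  refine Finset.mem_insert_of_mem (Finset.mem_erase.2 ⟨hxa, ?_⟩)
  by_cases hxb : x = b
  · exact hxb ▸ hcb
  · rwa [mergeAdd_apply_of_ne hxa hxb hab', ← mem_support_iff] at hx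

end Finsupp

section NonnegRelation

variable {M : Type*} [AddCommGroup M] [Module ℝ M]

structure IsNonnegRelation (T : Set M) (c : M →₀ ℝ) : Prop where
  ne_zero : c ≠ 0
  nonneg : ∀ x, 0 ≤ c x
  support_subset : ↑c.support ⊆ T
  linearCombination_eq_zero : Finsupp.linearCombination ℝ id c = 0

end NonnegRelation

theorem Finsupp.exists_mem_support_inner_neg {E : Type*} [NormedAddCommGroup E]
    [InnerProductSpace ℝ E] {c : E →₀ ℝ} (hc : ∀ x, 0 ≤ c x)
    (hsum : linearCombination ℝ id c = 0) {a : E} (ha : a ∈ c.support) (ha0 : a ≠ 0) :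
    ∃ b ∈ c.support, ⟪a, b⟫ < 0 := by
  by_contra! h
  have hinner : ⟪a, linearCombination ℝ id c⟫ = ∑ b ∈ c.support, c b * ⟪a, b⟫ := by
    simp [linearCombination_apply, Finsupp.sum, inner_sum, real_inner_smul_right]
  have hle := Finset.single_le_sum (f := fun b => c b * ⟪a, b⟫)
    (fun b hb => mul_nonneg (hc b) (h b hb)) ha
  have hpos : 0 < c a * ⟪a, a⟫ :=
    mul_pos ((hc a).lt_of_ne (mem_support_iff.1 ha).symm) (real_inner_self_pos.2 ha0)
  rw [← hinner, hsum, inner_zero_right] at hle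
  linarith

def supportLT {M : Type*} [AddCommGroup M] (T : Set M) (S' S : Finset M) : Prop :=
  S'.card < S.card ∨
    S'.card = S.card ∧ ∃ b ∈ T, ∑ x ∈ S', x - (∑ x ∈ S, x + b) ∈ AddSubmonoid.closure T

namespace IsRootSystem

variable {E : Type*} [NormedAddCommGroup E] [InnerProductSpace ℝ E] {Φ T : Set E}
  (hΦ : IsRootSystem Φ) (hT : IsClosedSub Φ T) (hspec : ∀ α ∈ T, -α ∉ T)
include hΦ hT hspec

theorem wellFoundedOn_supportLT : {S : Finset E | ↑S ⊆ T}.WellFoundedOn (supportLT T) := by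
  have : IsStrictOrder (Finset E) (supportLT T) :=
    { irrefl := by
        rintro S (h | ⟨-, b, hb, h⟩)
        · exact lt_irrefl _ h
        · exact hΦ.neg_notMem_addSubmonoidClosure hT hspec hb (by simpa using h)
      trans := by
        rintro S₁ S₂ S₃ (h₁ | ⟨h₁, b₁, hb₁, h₁'⟩) (h₂ | ⟨h₂, b₂, hb₂, h₂'⟩)
        · exact Or.inl (h₁.trans h₂)
        · exact Or.inl (h₂ ▸ h₁)
        · exact Or.inl (h₁ ▸ h₂)
        · refine Or.inr ⟨h₁.trans h₂, b₂, hb₂, ?_⟩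
          convert add_mem (add_mem h₁' h₂') (AddSubmonoid.subset_closure hb₁) using 1
          abel }
  have hTfin : T.Finite := hΦ.1.subset hT.1
  exact hTfin.toFinset.powerset.wellFoundedOn.mono le_rfl fun S hS => by simpa using hS

theorem exists_isNonnegRelation_supportLT {c : E →₀ ℝ} (hc : IsNonnegRelation T c) :
    ∃ c' : E →₀ ℝ, IsNonnegRelation T c' ∧ supportLT T c'.support c.support := by
  classical
  obtain ⟨a₀, ha₀⟩ := Finsupp.support_nonempty_iff.2 hc.ne_zero
  have hne0 : ∀ x ∈ c.support, x ≠ 0 := fun x hx => hΦ.ne_zero (hT.1 (hc.support_subset hx))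
  obtain ⟨b₀, hb₀, hab₀⟩ := Finsupp.exists_mem_support_inner_neg hc.nonneg
    hc.linearCombination_eq_zero ha₀ (hne0 a₀ ha₀)
  obtain ⟨a, ha, b, hb, hab, hcab⟩ :
      ∃ a ∈ c.support, ∃ b ∈ c.support, ⟪a, b⟫ < 0 ∧ c a ≤ c b := by
    rcases le_total (c a₀) (c b₀) with h | h
    · exact ⟨a₀, ha₀, b₀, hb₀, hab₀, h⟩
    · exact ⟨b₀, hb₀, a₀, ha₀, by rwa [real_inner_comm], h⟩
  have haT := hc.support_subset ha
  have hbT := hc.support_subset hb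
  have hab0 : a + b ≠ 0 := fun h => hspec a haT (eq_neg_of_add_eq_zero_right h ▸ hbT)
  have habT : a + b ∈ T :=
    hT.2 a haT b hbT (hΦ.add_mem_of_inner_neg (hT.1 haT) (hT.1 hbT) hab hab0)
  have hne : a ≠ b := by
    rintro rfl
    exact (hΦ.inner_self_pos (hT.1 haT)).not_gt hab
  have hsub := Finsupp.support_mergeAdd_subset (c := c) (hne0 b hb) hne hb
  refine ⟨c.mergeAdd a b, ⟨?_, ?_, ?_, ?_⟩, ?_⟩
  · refine fun h => (DFunLike.congr_fun h (a + b)).not_gt ?_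
    rw [Finsupp.mergeAdd_apply_add (hne0 a ha) (hne0 b hb)]
    exact add_pos_of_nonneg_of_pos (hc.nonneg _)
      ((hc.nonneg a).lt_of_ne (Finsupp.mem_support_iff.1 ha).symm)
  · exact Finsupp.mergeAdd_nonneg (hne0 a ha) (hne0 b hb) hne hc.nonneg hcab
  · intro x hx
    rcases Finset.mem_insert.1 (hsub hx) with rfl | hx
    · exact habT
    · exact hc.support_subset (Finset.mem_of_mem_erase hx)
  · rw [Finsupp.linearCombination_mergeAdd, hc.linearCombination_eq_zero]
  · rcases Finset.card_lt_or_sum_eq_of_subset_insert_erase ha hsub with hlt | ⟨heq, hsum⟩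
    · exact Or.inl hlt
    · refine Or.inr ⟨heq, b, hbT, ?_⟩
      rw [hsum]
      convert (AddSubmonoid.closure T).zero_mem using 1
      abel

theorem not_isNonnegRelation (c : E →₀ ℝ) : ¬ IsNonnegRelation T c := by
  intro hc
  suffices ∀ S ∈ {S : Finset E | ↑S ⊆ T}, ∀ c, IsNonnegRelation T c → c.support ≠ S from
    this _ hc.support_subset c hc rfl
  intro S hS
  refine (hΦ.wellFoundedOn_supportLT hT hspec).induction hS
    (P := fun S => ∀ c, IsNonnegRelation T c → c.support ≠ S) fun S _ ih c hc hcS => ?_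
  obtain ⟨c', hc', hlt⟩ := hΦ.exists_isNonnegRelation_supportLT hT hspec hc
  exact ih _ hc'.support_subset (hcS ▸ hlt) c' hc' rfl

theorem zero_notMem_convexHull : (0 : E) ∉ convexHull ℝ T := by
  classical
  have hTfin : T.Finite := hΦ.1.subset hT.1
  rw [← hTfin.coe_toFinset, Finset.mem_convexHull']
  rintro ⟨w, hw0, hw1, hw⟩
  set F := hTfin.toFinset
  let c := Finsupp.onFinset F (Set.indicator F w) fun _ hx => Set.mem_of_indicator_ne_zero hx
  refine hΦ.not_isNonnegRelation hT hspec c ⟨?_, fun x => ?_, ?_, ?_⟩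
  · obtain ⟨x, hx, hwx⟩ := Finset.exists_ne_zero_of_sum_ne_zero (hw1 ▸ one_ne_zero)
    refine fun h => hwx ?_
    simpa [c, Set.indicator_of_mem (Finset.mem_coe.2 hx)] using DFunLike.congr_fun h x
  · by_cases hx : x ∈ F
    · simpa [c, Set.indicator_of_mem (Finset.mem_coe.2 hx)] using hw0 x hx
    · simp [c, Set.indicator_of_notMem (mt Finset.mem_coe.1 hx)]
  · exact fun x hx => by simpa [F] using Finsupp.support_onFinset_subset hx
  · rw [Finsupp.linearCombination_onFinset, ← hw]
    exact Finset.sum_congr rfl fun x hx => by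
      rw [Set.indicator_of_mem (Finset.mem_coe.2 hx), id]

end IsRootSystem

theorem exists_forall_pos_of_zero_notMem_convexHull {E : Type*} [NormedAddCommGroup E]
    [NormedSpace ℝ E] {T : Set E} (hT : T.Finite) (h : (0 : E) ∉ convexHull ℝ T) :
    ∃ f : StrongDual ℝ E, ∀ x ∈ T, 0 < f x := by
  obtain ⟨f, u, hu, hf⟩ :=
    geometric_hahn_banach_point_closed (convex_convexHull ℝ T) (hT.isClosed_convexHull ℝ) h
  exact ⟨f, fun x hx => (map_zero f ▸ hu).trans (hf x (subset_convexHull ℝ T hx))⟩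

theorem IsRootSystem.exists_forall_pos {E : Type*} [NormedAddCommGroup E] [InnerProductSpace ℝ E]
    {Φ T : Set E} (hΦ : IsRootSystem Φ) (hT : IsClosedSub Φ T) (hspec : ∀ α ∈ T, -α ∉ T) :
    ∃ f : StrongDual ℝ E, ∀ x ∈ T, 0 < f x :=
  exists_forall_pos_of_zero_notMem_convexHull (hΦ.1.subset hT.1)
    (hΦ.zero_notMem_convexHull hT hspec)

open Filter Topology in
theorem LinearMap.exists_ne_zero_and_pos {M : Type*} [AddCommGroup M] [Module ℝ M]
    {s t : Set M} (hs : s.Finite) (ht : t.Finite) (g₀ g₁ : M →ₗ[ℝ] ℝ) (h₁ : ∀ x ∈ s, g₁ x ≠ 0)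
    (h₀ : ∀ x ∈ t, 0 < g₀ x) : ∃ g : M →ₗ[ℝ] ℝ, (∀ x ∈ s, g x ≠ 0) ∧ ∀ x ∈ t, 0 < g x := by
  have hne : ∀ x ∈ s, ∀ᶠ ε in 𝓝[≠] (0 : ℝ), g₀ x + ε * g₁ x ≠ 0 := fun x hx =>
    (eventually_cofinite_ne (-g₀ x / g₁ x)).filter_mono (nhdsNE_le_cofinite 0) |>.mono
      fun ε hε h => hε (by field_simp [h₁ x hx]; linarith)
  have hpos : ∀ x ∈ t, ∀ᶠ ε in 𝓝[≠] (0 : ℝ), 0 < g₀ x + ε * g₁ x := fun x hx =>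
    have hlim : Tendsto (fun ε : ℝ => g₀ x + ε * g₁ x) (𝓝 0) (𝓝 (g₀ x)) := by
      have hcont : Continuous fun ε : ℝ => g₀ x + ε * g₁ x := by fun_prop
      simpa using hcont.tendsto 0
    (hlim.eventually_const_lt (h₀ x hx)).filter_mono nhdsWithin_le_nhds
  obtain ⟨ε, hεs, hεt⟩ := ((hs.eventually_all.2 hne).and (ht.eventually_all.2 hpos)).exists
  exact ⟨g₀ + ε • g₁, fun x hx => by simpa using hεs x hx, fun x hx => by simpa using hεt x hx⟩

open Pointwise in
theorem two_mul_ncard_setOf_pos {M : Type*} [AddCommGroup M] [Module ℝ M] {s : Set M}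
    (hs : s.Finite) (hneg : ∀ x ∈ s, -x ∈ s) (g : M →ₗ[ℝ] ℝ) (hg : ∀ x ∈ s, g x ≠ 0) :
    2 * {x ∈ s | 0 < g x}.ncard = s.ncard := by
  set P := {x ∈ s | 0 < g x}
  have hunion : P ∪ -P = s := by
    ext x
    simp only [P, Set.mem_union, Set.mem_neg, Set.mem_ofPred_eq, map_neg, Left.neg_pos_iff]
    refine ⟨?_, fun hx => (hg x hx).gt_or_lt.imp (⟨hx, ·⟩) (⟨hneg x hx, ·⟩)⟩
    rintro (⟨hx, -⟩ | ⟨hx, -⟩)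
    · exact hx
    · simpa using hneg _ hx
  have hdisj : Disjoint P (-P) := Set.disjoint_left.2 fun x hx hx' => by
    simp only [P, Set.mem_neg, Set.mem_ofPred_eq, map_neg, Left.neg_pos_iff] at hx hx'
    linarith [hx.2, hx'.2]
  have hP : P.Finite := hs.subset fun x hx => hx.1
  rw [← hunion, Set.ncard_union_eq hdisj hP hP.neg, Set.ncard_neg, two_mul]

section Extension

variable {M : Type*} [AddCommGroup M] {Φ T : Set M} {α : M}

theorem IsClosedSub.insert (hT : IsClosedSub Φ T) (hα : α ∈ Φ) (hαα : α + α ∉ Φ)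
    (hadd : ∀ y ∈ T, α + y ∈ Φ → α + y ∈ T) : IsClosedSub Φ (insert α T) := by
  refine ⟨Set.insert_subset hα hT.1, ?_⟩
  rintro x (rfl | hx) y (rfl | hy) hxy
  · exact absurd hxy hαα
  · exact Set.mem_insert_of_mem _ (hadd y hy hxy)
  · rw [add_comm] at hxy ⊢
    exact Set.mem_insert_of_mem _ (hadd x hx hxy)
  · exact Set.mem_insert_of_mem _ (hT.2 x hx y hy hxy)

variable [Module ℝ M]

theorem neg_notMem_of_forall_pos {S : Set M} (g : M →ₗ[ℝ] ℝ) (hg : ∀ x ∈ S, 0 < g x) :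
    ∀ x ∈ S, -x ∉ S := fun x hx hx' => by
  linarith [hg x hx, map_neg g x ▸ hg _ hx']

theorem notMem_sumSet_insert (hT : IsClosedSub Φ T) (hα : α ∈ Φ) (hαT : α ∉ T)
    (g : M →ₗ[ℝ] ℝ) (hg : ∀ x ∈ insert α T, 0 < g x) : α ∉ sumSet (insert α T) := by
  rintro ⟨-, x, hx, y, hy, hxy⟩
  have hgxy : g α = g x + g y := by rw [hxy, map_add]
  have hgx := hg x hx
  have hgy := hg y hy
  rcases hx with rfl | hx
  · linarith
  rcases hy with rfl | hy
  · linarith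
  exact hαT (hxy ▸ hT.2 x hx y hy (hxy ▸ hα))

end Extension

theorem IsRootSystem.exists_insert_isClosedSub {E : Type*} [NormedAddCommGroup E]
    [InnerProductSpace ℝ E] {Φ T : Set E} (hΦ : IsRootSystem Φ) (hT : IsClosedSub Φ T)
    (g : E →ₗ[ℝ] ℝ) (hg : ∀ x ∈ T, 0 < g x) (hne : ({γ ∈ Φ | 0 < g γ} \ T).Nonempty) :
    ∃ α ∈ Φ, α ∉ T ∧ IsClosedSub Φ (insert α T) ∧ (∀ x ∈ insert α T, -x ∉ insert α T) ∧
      α ∉ sumSet (insert α T) := by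
  obtain ⟨α, ⟨⟨hαΦ, hαpos⟩, hαT⟩, hmax⟩ :=
    Set.exists_max_image _ g (hΦ.1.subset fun _ hx => hx.1.1) hne
  have hgT : ∀ x ∈ insert α T, 0 < g x := by
    rintro x (rfl | hx)
    exacts [hαpos, hg x hx]
  -- `α` maximises `g` off `T`, and `g (α + y) > g α` for `y ∈ T`.
  have hadd : ∀ y ∈ T, α + y ∈ Φ → α + y ∈ T := fun y hy hyΦ => by
    by_contra h
    have := hmax (α + y) ⟨⟨hyΦ, by rw [map_add]; linarith [hg y hy]⟩, h⟩
    rw [map_add] at this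
    linarith [hg y hy]
  exact ⟨α, hαΦ, hαT, hT.insert hαΦ (hΦ.add_self_notMem hαΦ) hadd,
    neg_notMem_of_forall_pos g hgT, notMem_sumSet_insert hT hαΦ hαT g hgT⟩

theorem exists_predecessor_special_closed_general {E : Type*} [NormedAddCommGroup E]
    [InnerProductSpace ℝ E] (Φ Φp T' : Set E)
    (hΦ : IsRootSystem Φ) (hΦp : IsPositiveSystem Φ Φp)
    (hT' : IsClosedSub Φ T') (hspec : ∀ α ∈ T', -α ∉ T')
    (n : ℕ) (hn : T'.ncard = n) (hlt : n < Φp.ncard) :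
    ∃ T : Set E, IsClosedSub Φ T ∧ (∀ α ∈ T, -α ∉ T) ∧ T.ncard = n + 1 ∧
      ∃ α ∈ T \ sumSet T, ∃ w ∈ weylGroup Φ, ⇑w '' (T \ {α}) = T' := by
  obtain ⟨f₁, hf₁, rfl⟩ := hΦp
  have hT'fin : T'.Finite := hΦ.1.subset hT'.1
  obtain ⟨f₀, hf₀⟩ := hΦ.exists_forall_pos hT' hspec
  obtain ⟨g, hgΦ, hgT'⟩ :=
    LinearMap.exists_ne_zero_and_pos hΦ.1 hT'fin (f₀ : E →ₗ[ℝ] ℝ) f₁ hf₁ hf₀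
  have hcard : {γ ∈ Φ | 0 < g γ}.ncard = {γ ∈ Φ | 0 < f₁ γ}.ncard := by
    have := two_mul_ncard_setOf_pos hΦ.1 (fun _ => hΦ.neg_mem) g hgΦ
    have := two_mul_ncard_setOf_pos hΦ.1 (fun _ => hΦ.neg_mem) f₁ hf₁
    omega
  have hne : ({γ ∈ Φ | 0 < g γ} \ T').Nonempty :=
    Set.sdiff_nonempty.2 fun h => (Set.ncard_le_ncard h hT'fin).not_gt (by omega)
  obtain ⟨α, -, hαT', hclosed, hspecT, hsum⟩ := hΦ.exists_insert_isClosedSub hT' g hgT' hne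
  refine ⟨insert α T', hclosed, hspecT, by rw [Set.ncard_insert_of_notMem hαT' hT'fin, hn],
    α, ⟨Set.mem_insert α T', hsum⟩, 1, one_mem _, ?_⟩
  rw [Set.insert_sdiff_self_of_notMem hαT', LinearEquiv.coe_one, Set.image_id]

/-- Every special closed subset of cardinality `n < |Φ⁺|` arises as a
successor of a special closed subset of cardinality `n + 1`. -/
theorem exists_predecessor_special_closed {E : Type*} [NormedAddCommGroup E]
    [InnerProductSpace ℝ E] [FiniteDimensional ℝ E] (Φ Φp T' : Set E)
    (hΦ : IsRootSystem Φ) (hΦp : IsPositiveSystem Φ Φp)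
    (hT' : IsClosedSub Φ T') (hspec : ∀ α ∈ T', -α ∉ T')
    (n : ℕ) (hn : T'.ncard = n) (hlt : n < Φp.ncard) :
    ∃ T : Set E, IsClosedSub Φ T ∧ (∀ α ∈ T, -α ∉ T) ∧ T.ncard = n + 1 ∧
      ∃ α ∈ T \ sumSet T, ∃ w ∈ weylGroup Φ, ⇑w '' (T \ {α}) = T' :=
  exists_predecessor_special_closed_general Φ Φp T' hΦ hΦp hT' hspec n hn hlt
end

section
/- Let Φ be a root system in E, let T ⊆ Φ be a special closed subset, and set S = {α ∈ Φ : α ∉ T, −α ∉ T, and T ∪ {α, −α} is closed}. Then for every α ∈ S the reflection s_α maps T onto itself, s_α(T) = T; consequently the subgroup of the Weyl group generated by the reflections s_α with α ∈ S stabilizes T. -/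
open scoped RealInnerProductSpace

section helpers
variable {E : Type*} [NormedAddCommGroup E] [InnerProductSpace ℝ E]

lemma my_inner_self_pos {α : E} (h : α ≠ 0) : (0:ℝ) < ⟪α, α⟫ :=
  lt_of_le_of_ne real_inner_self_nonneg (fun he => h (inner_self_eq_zero.mp he.symm))

lemma reflectRoot_neg (α x : E) : reflectRoot (-α) x = reflectRoot α x := by
  simp only [reflectRoot, inner_neg_right, inner_neg_left, neg_neg, smul_neg]
  rw [mul_neg, neg_div, neg_smul, neg_neg]

lemma reflectRoot_invol {α : E} (hα : α ≠ 0) (x : E) :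
    reflectRoot α (reflectRoot α x) = x := by
  have ha : ⟪α, α⟫ ≠ 0 := ne_of_gt (my_inner_self_pos hα)
  simp only [reflectRoot, inner_sub_left, inner_smul_left, RCLike.star_def, conj_trivial]
  have h : 2 * (⟪x, α⟫ - 2 * ⟪x, α⟫ / ⟪α, α⟫ * ⟪α, α⟫) / ⟪α, α⟫
      = -(2 * ⟪x, α⟫ / ⟪α, α⟫) := by field_simp; ring
  rw [h, neg_smul, sub_neg_eq_add, sub_add_cancel]

lemma reflectRoot_self {α : E} (hα : α ≠ 0) : reflectRoot α α = -α := by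
  have ha : ⟪α, α⟫ ≠ 0 := ne_of_gt (my_inner_self_pos hα)
  rw [reflectRoot, mul_div_assoc, div_self ha, mul_one]
  module

lemma reflectRoot_neg_self {α : E} (hα : α ≠ 0) : reflectRoot α (-α) = α := by
  have ha : ⟪α, α⟫ ≠ 0 := ne_of_gt (my_inner_self_pos hα)
  rw [reflectRoot, inner_neg_left, mul_neg, neg_div, mul_div_assoc, div_self ha, mul_one]
  module

lemma root_neg_mem {Φ : Set E} (hΦ : IsRootSystem Φ) {α : E} (hα : α ∈ Φ) : -α ∈ Φ := by
  have hα0 : α ≠ 0 := fun h => hΦ.2.2.1 (h ▸ hα)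
  have := hΦ.2.2.2.2.1 α hα α hα
  rwa [reflectRoot_self hα0] at this

lemma root_strict_cs {Φ : Set E} (hΦ : IsRootSystem Φ) {α β : E} (hα : α ∈ Φ) (hβ : β ∈ Φ)
    (h1 : β ≠ α) (h2 : β ≠ -α) : ⟪β, α⟫ * ⟪β, α⟫ < ⟪β, β⟫ * ⟪α, α⟫ := by
  have hα0 : α ≠ 0 := fun h => hΦ.2.2.1 (h ▸ hα)
  have ha : 0 < ⟪α, α⟫ := my_inner_self_pos hα0
  rcases lt_or_eq_of_le (real_inner_mul_inner_self_le β α) with h | h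
  · exact h
  · exfalso
    set t : ℝ := ⟪β, α⟫ / ⟪α, α⟫ with ht
    have hz : ⟪β - t • α, β - t • α⟫ = 0 := by
      simp only [inner_sub_left, inner_sub_right, inner_smul_left, inner_smul_right,
        RCLike.star_def, conj_trivial, ht]
      have hc : ⟪α, β⟫ = ⟪β, α⟫ := real_inner_comm β α
      rw [hc]
      field_simp
      linear_combination -h
    have hbt : β = t • α := sub_eq_zero.mp (inner_self_eq_zero.mp hz)
    rcases hΦ.2.2.2.1 α hα t (hbt ▸ hβ) with h' | h'
    · exact h1 (hbt.trans h')
    · exact h2 (hbt.trans h')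

lemma cartan_mul_le_three {Φ : Set E} (hΦ : IsRootSystem Φ) {α β : E} (hα : α ∈ Φ) (hβ : β ∈ Φ)
    (h1 : β ≠ α) (h2 : β ≠ -α) {n m : ℤ} (hn : 2 * ⟪β, α⟫ / ⟪α, α⟫ = (n:ℝ))
    (hm : 2 * ⟪α, β⟫ / ⟪β, β⟫ = (m:ℝ)) : n * m ≤ 3 := by
  have hα0 : α ≠ 0 := fun h => hΦ.2.2.1 (h ▸ hα)
  have hβ0 : β ≠ 0 := fun h => hΦ.2.2.1 (h ▸ hβ)
  have ha : 0 < ⟪α, α⟫ := my_inner_self_pos hα0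
  have hb : 0 < ⟪β, β⟫ := my_inner_self_pos hβ0
  have hcs := root_strict_cs hΦ hα hβ h1 h2
  have h4 : ((n * m : ℤ) : ℝ) < 4 := by
    push_cast
    rw [← hn, ← hm, real_inner_comm β α, div_mul_div_comm, div_lt_iff₀ (by positivity)]
    nlinarith [hcs]
  have : (n * m : ℤ) < 4 := by exact_mod_cast h4
  omega

lemma root_sub_mem {Φ : Set E} (hΦ : IsRootSystem Φ) {α β : E} (hα : α ∈ Φ) (hβ : β ∈ Φ)
    (h1 : β ≠ α) (h2 : β ≠ -α) (hpos : 0 < ⟪β, α⟫) : β - α ∈ Φ := by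
  have hα0 : α ≠ 0 := fun h => hΦ.2.2.1 (h ▸ hα)
  have hβ0 : β ≠ 0 := fun h => hΦ.2.2.1 (h ▸ hβ)
  have ha : 0 < ⟪α, α⟫ := my_inner_self_pos hα0
  have hb : 0 < ⟪β, β⟫ := my_inner_self_pos hβ0
  obtain ⟨n, hn⟩ := hΦ.2.2.2.2.2 α hα β hβ
  obtain ⟨m, hm⟩ := hΦ.2.2.2.2.2 β hβ α hα
  have hc : ⟪α, β⟫ = ⟪β, α⟫ := real_inner_comm β α
  rw [hc] at hm
  have hn1 : 1 ≤ n := by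
    have : (0:ℝ) < (n:ℝ) := by rw [← hn]; exact div_pos (by linarith) ha
    exact_mod_cast this
  have hm1 : 1 ≤ m := by
    have : (0:ℝ) < (m:ℝ) := by rw [← hm]; exact div_pos (by linarith) hb
    exact_mod_cast this
  have hnm : n * m ≤ 3 :=
    cartan_mul_le_three hΦ hα hβ h1 h2 hn (by rwa [← hc] at hm)
  have hone : n = 1 ∨ m = 1 := by
    by_contra h
    push_neg at h
    obtain ⟨h3, h4⟩ := h
    have hn2 : 2 ≤ n := by omega
    have hm2 : 2 ≤ m := by omega
    nlinarith
  rcases hone with h | h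
  · have := hΦ.2.2.2.2.1 α hα β hβ
    rwa [reflectRoot, hn, h, Int.cast_one, one_smul] at this
  · have h' := hΦ.2.2.2.2.1 β hβ α hα
    rw [reflectRoot, hc, hm, h, Int.cast_one, one_smul] at h'
    have := root_neg_mem hΦ h'
    rwa [neg_sub] at this

lemma reflect_mem_T_aux {Φ T : Set E} (hΦ : IsRootSystem Φ) (hT : IsClosedSub Φ T)
    {α : E} (hα : α ∈ Φ) (hαT : α ∉ T) (hαT' : -α ∉ T)
    (hcl : IsClosedSub Φ (T ∪ {α, -α})) {β : E} (hβT : β ∈ T)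
    (hpos : 0 ≤ ⟪β, α⟫) : reflectRoot α β ∈ T := by
  have hβ : β ∈ Φ := hT.1 hβT
  have hα0 : α ≠ 0 := fun h => hΦ.2.2.1 (h ▸ hα)
  have hβ0 : β ≠ 0 := fun h => hΦ.2.2.1 (h ▸ hβ)
  have ha : 0 < ⟪α, α⟫ := my_inner_self_pos hα0
  have hb : 0 < ⟪β, β⟫ := my_inner_self_pos hβ0
  obtain ⟨n, hn⟩ := hΦ.2.2.2.2.2 α hα β hβ
  obtain ⟨m, hm⟩ := hΦ.2.2.2.2.2 β hβ α hα
  have hβα : β ≠ α := fun h => hαT (h ▸ hβT)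
  have hβnα : β ≠ -α := fun h => hαT' (h ▸ hβT)
  have key : reflectRoot α β = β - ((n:ℝ)) • α := by rw [reflectRoot, hn]
  have hrβ : reflectRoot α β ∈ Φ := hΦ.2.2.2.2.1 α hα β hβ
  have hn0 : 0 ≤ n := by
    have : (0:ℝ) ≤ (n:ℝ) := by rw [← hn]; exact div_nonneg (by linarith) (le_of_lt ha)
    exact_mod_cast this
  have hαmem : α ∈ T ∪ {α, -α} := by simp
  have hnαmem : -α ∈ T ∪ {α, -α} := by simp
  suffices h : reflectRoot α β ∈ T ∪ {α, -α} by
    rcases h with h | h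
    · exact h
    · exfalso
      simp only [Set.mem_insert_iff, Set.mem_singleton_iff] at h
      rcases h with h | h
      · have hb2 : β = reflectRoot α α := by rw [← reflectRoot_invol hα0 β, h]
        rw [reflectRoot_self hα0] at hb2
        exact hβnα hb2
      · have hb2 : β = reflectRoot α (-α) := by rw [← reflectRoot_invol hα0 β, h]
        rw [reflectRoot_neg_self hα0] at hb2
        exact hβα hb2
  rcases eq_or_lt_of_le hn0 with h0n | h1n
  · rw [key, ← h0n]
    simp only [Int.cast_zero, zero_smul, sub_zero]
    exact Or.inl hβT
  · have h1nr : (1:ℝ) ≤ (n:ℝ) := by exact_mod_cast h1n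
    have h2ba : 2 * ⟪β, α⟫ = (n:ℝ) * ⟪α, α⟫ := by
      field_simp at hn; linarith [hn]
    have hip : 0 < ⟪β, α⟫ := by nlinarith
    have hc : ⟪α, β⟫ = ⟪β, α⟫ := real_inner_comm β α
    have hm1 : 1 ≤ m := by
      have : (0:ℝ) < (m:ℝ) := by
        rw [← hm, hc]; exact div_pos (by linarith) hb
      exact_mod_cast this
    have hnm : n * m ≤ 3 := cartan_mul_le_three hΦ hα hβ hβα hβnα hn hm
    have hn3 : n ≤ 3 := by nlinarith
    have hstep1 : β - α ∈ Φ := root_sub_mem hΦ hα hβ hβα hβnα hip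
    have hstep1' : β - α ∈ T ∪ {α, -α} := by
      have := hcl.2 β (Or.inl hβT) (-α) hnαmem (by rwa [← sub_eq_add_neg])
      rwa [← sub_eq_add_neg] at this
    interval_cases n
    · rw [key]
      push_cast
      rw [one_smul]
      exact hstep1'
    · have heq : reflectRoot α β = (β - α) + -α := by rw [key]; push_cast; module
      rw [heq]
      exact hcl.2 (β - α) hstep1' (-α) hnαmem (heq ▸ hrβ)
    · have hba : β - α ≠ α := by
        intro h
        have hb2 : β = (2:ℝ) • α := by
          rw [two_smul]; exact sub_eq_iff_eq_add.mp h
        rcases hΦ.2.2.2.1 α hα 2 (hb2 ▸ hβ) with h' | h'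
        · apply hα0
          have h2 : (2:ℝ) • α - α = 0 := by rw [h']; simp
          have h3 : (2:ℝ) • α - α = α := by module
          rw [h3] at h2; exact h2
        · apply hα0
          have h2 : (2:ℝ) • α + α = 0 := by rw [h']; simp
          have h3 : (2:ℝ) • α + α = (3:ℝ) • α := by module
          rw [h3] at h2
          have := smul_eq_zero.mp h2
          rcases this with h4 | h4
          · norm_num at h4
          · exact h4
      have hbna : β - α ≠ -α := by
        intro h
        apply hβ0
        have h' := sub_eq_iff_eq_add.mp h
        rw [h']; abel
      have hip2 : 0 < ⟪β - α, α⟫ := by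
        rw [inner_sub_left]
        have h2ba' : 2 * ⟪β, α⟫ = 3 * ⟪α, α⟫ := by exact_mod_cast h2ba
        linarith
      have hstep2 : β - α - α ∈ Φ := root_sub_mem hΦ hα hstep1 hba hbna hip2
      have hstep2' : β - α - α ∈ T ∪ {α, -α} := by
        have := hcl.2 (β - α) hstep1' (-α) hnαmem (by rwa [← sub_eq_add_neg])
        rwa [← sub_eq_add_neg] at this
      have heq : reflectRoot α β = (β - α - α) + -α := by rw [key]; push_cast; module
      rw [heq]
      exact hcl.2 (β - α - α) hstep2' (-α) hnαmem (heq ▸ hrβ)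

lemma reflect_mem_T {Φ T : Set E} (hΦ : IsRootSystem Φ) (hT : IsClosedSub Φ T)
    {α : E} (hα : α ∈ Φ) (hαT : α ∉ T) (hαT' : -α ∉ T)
    (hcl : IsClosedSub Φ (T ∪ {α, -α})) {β : E} (hβT : β ∈ T) :
    reflectRoot α β ∈ T := by
  rcases le_or_gt 0 ⟪β, α⟫ with h | h
  · exact reflect_mem_T_aux hΦ hT hα hαT hαT' hcl hβT h
  · rw [← reflectRoot_neg α β]
    have hset : T ∪ {-α, -(-α)} = T ∪ {α, -α} := by
      rw [neg_neg, Set.pair_comm]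
    refine reflect_mem_T_aux hΦ hT (root_neg_mem hΦ hα) hαT' (by rwa [neg_neg]) ?_ hβT ?_
    · rwa [hset]
    · rw [inner_neg_right]; linarith

end helpers

theorem reflections_stabilize_specPart {E : Type*} [NormedAddCommGroup E]
    [InnerProductSpace ℝ E] [FiniteDimensional ℝ E] (Φ T S : Set E)
    (hΦ : IsRootSystem Φ) (hT : IsClosedSub Φ T) (hspec : ∀ α ∈ T, -α ∉ T)
    (hS : S = {α ∈ Φ | α ∉ T ∧ -α ∉ T ∧ IsClosedSub Φ (T ∪ {α, -α})}) :
    (∀ α ∈ S, reflectRoot α '' T = T) ∧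
      ∀ w ∈ Subgroup.closure {w : E ≃ₗ[ℝ] E | ∃ α ∈ S, ∀ x, w x = reflectRoot α x},
        ⇑w '' T = T := by
  have part1 : ∀ α ∈ S, reflectRoot α '' T = T := by
    intro α hαS
    rw [hS] at hαS
    obtain ⟨hα, hαT, hαT', hcl⟩ := hαS
    have hα0 : α ≠ 0 := fun h => hΦ.2.2.1 (h ▸ hα)
    apply Set.Subset.antisymm
    · rintro _ ⟨β, hβT, rfl⟩
      exact reflect_mem_T hΦ hT hα hαT hαT' hcl hβT
    · intro β hβT
      exact ⟨reflectRoot α β, reflect_mem_T hΦ hT hα hαT hαT' hcl hβT,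
        reflectRoot_invol hα0 β⟩
  refine ⟨part1, ?_⟩
  intro w hw
  induction hw using Subgroup.closure_induction with
  | mem w hw =>
    obtain ⟨α, hαS, hwα⟩ := hw
    have : ⇑w = reflectRoot α := funext hwα
    rw [this]
    exact part1 α hαS
  | one => simp
  | mul w w' _ _ hw hw' =>
    have : ⇑(w * w') = ⇑w ∘ ⇑w' := rfl
    rw [this, Set.image_comp, hw', hw]
  | inv w _ hw =>
    have h1 : ⇑w⁻¹ '' (⇑w '' T) = T := by
      rw [← Set.image_comp]
      have : ⇑w⁻¹ ∘ ⇑w = id := funext fun x => w.symm_apply_apply x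
      rw [this, Set.image_id]
    rw [hw] at h1
    exact h1
end
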